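/- arXiv:2112.00454 — 3 statements merged into one kernel-verified Lean document; each statement's English description precedes it below -/
import Mathlib

section
/- Let P = (h, 1) and Q = (-h, -1) with h > 0, and suppose C is a point with first coordinate greater than h such that the segment PC has slope -m and the segment QC has slope +m for some m > 0. Then for any point H = (x, h/x) with x > h on the hyperbola xy = h, the (unsigned) angle that PH makes with the positive X-direction equals the angle that QH makes with the positive X-direction, and consequently the difference between the angle ∠HPQ (angle at P in triangle P, Q, H) and the angle ∠HQP (angle at Q) equals the difference between ∠CPQ and ∠CQP. -/
open EuclideanGeometry InnerProductGeometry
open Real (pi arctan)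
local notation "π" => Real.pi


noncomputable def pt (a b : ℝ) : EuclideanSpace ℝ (Fin 2) := !₂[a, b]

lemma sqrtAux (h : ℝ) (hh : 0 < h) : Real.sqrt (1 + (1/h)^2) = Real.sqrt (h^2+1) / h := by
  rw [show 1 + (1/h)^2 = (h^2+1)/h^2 by field_simp, Real.sqrt_div (by positivity),
    Real.sqrt_sq hh.le]

lemma cosA (h a : ℝ) (hh : 0 < h) (ha : 0 < a) :
    Real.cos (π - Real.arctan (1/h) - Real.arctan (1/a)) =
      (1 - a*h)/(Real.sqrt (a^2+1) * Real.sqrt (h^2+1)) := by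
  rw [show π - Real.arctan (1/h) - Real.arctan (1/a)
      = π - (Real.arctan (1/h) + Real.arctan (1/a)) by ring,
    Real.cos_pi_sub, Real.cos_add, Real.cos_arctan, Real.sin_arctan, Real.cos_arctan,
    Real.sin_arctan, sqrtAux h hh, sqrtAux a ha]
  have h1 : Real.sqrt (h^2+1) > 0 := by positivity
  have h2 : Real.sqrt (a^2+1) > 0 := by positivity
  field_simp
  ring

lemma cosB (h a : ℝ) (hh : 0 < h) (ha : 0 < a) :
    Real.cos (Real.arctan (1/h) - Real.arctan (1/a)) =
      (a*h + 1)/(Real.sqrt (a^2+1) * Real.sqrt (h^2+1)) := by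
  rw [Real.cos_sub, Real.cos_arctan, Real.sin_arctan, Real.cos_arctan,
    Real.sin_arctan, sqrtAux h hh, sqrtAux a ha]
  have h1 : Real.sqrt (h^2+1) > 0 := by positivity
  have h2 : Real.sqrt (a^2+1) > 0 := by positivity
  field_simp

lemma normP (h a : ℝ) (hh : 0 < h) (ha : h < a) :
    ‖pt a (h/a) - pt h 1‖ = (a-h) * Real.sqrt (a^2+1) / a := by
  have ha0 : 0 < a := hh.trans ha
  rw [EuclideanSpace.norm_eq]
  simp only [Fin.sum_univ_two, PiLp.sub_apply, Real.norm_eq_abs, sq_abs, pt, PiLp.toLp_apply,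
    Matrix.cons_val_zero, Matrix.cons_val_one, Matrix.head_cons]
  rw [show (a-h)^2 + (h/a-1)^2 = (a-h)^2 * (a^2+1) / a^2 by field_simp; ring,
    Real.sqrt_div (by positivity), Real.sqrt_mul (by positivity),
    Real.sqrt_sq (by linarith), Real.sqrt_sq ha0.le]

lemma normQ (h a : ℝ) (hh : 0 < h) (ha : h < a) :
    ‖pt a (h/a) - pt (-h) (-1)‖ = (a+h) * Real.sqrt (a^2+1) / a := by
  have ha0 : 0 < a := hh.trans ha
  rw [EuclideanSpace.norm_eq]
  simp only [Fin.sum_univ_two, PiLp.sub_apply, Real.norm_eq_abs, sq_abs, pt, PiLp.toLp_apply,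
    Matrix.cons_val_zero, Matrix.cons_val_one, Matrix.head_cons]
  rw [show (a - -h)^2 + (h/a - -1)^2 = (a+h)^2 * (a^2+1) / a^2 by field_simp; ring,
    Real.sqrt_div (by positivity), Real.sqrt_mul (by positivity),
    Real.sqrt_sq (by linarith), Real.sqrt_sq ha0.le]

lemma normPQ (h : ℝ) (hh : 0 < h) : ‖pt (-h) (-1) - pt h 1‖ = 2 * Real.sqrt (h^2+1) := by
  rw [EuclideanSpace.norm_eq]
  simp only [Fin.sum_univ_two, PiLp.sub_apply, Real.norm_eq_abs, sq_abs, pt, PiLp.toLp_apply,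
    Matrix.cons_val_zero, Matrix.cons_val_one, Matrix.head_cons]
  rw [show (-h-h)^2 + (-1-(1:ℝ))^2 = 2^2 * (h^2+1) by ring, Real.sqrt_mul (by positivity),
    Real.sqrt_sq (by norm_num)]

lemma normQP (h : ℝ) (hh : 0 < h) : ‖pt h 1 - pt (-h) (-1)‖ = 2 * Real.sqrt (h^2+1) := by
  rw [EuclideanSpace.norm_eq]
  simp only [Fin.sum_univ_two, PiLp.sub_apply, Real.norm_eq_abs, sq_abs, pt, PiLp.toLp_apply,
    Matrix.cons_val_zero, Matrix.cons_val_one, Matrix.head_cons]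
  rw [show (h - -h)^2 + (1 - -(1:ℝ))^2 = 2^2 * (h^2+1) by ring, Real.sqrt_mul (by positivity),
    Real.sqrt_sq (by norm_num)]

lemma angleP (h a : ℝ) (hh : 0 < h) (ha : h < a) :
    ∠ (pt a (h/a)) (pt h 1) (pt (-h) (-1))
      = π - Real.arctan (1/h) - Real.arctan (1/a) := by
  have ha0 : 0 < a := hh.trans ha
  rw [EuclideanGeometry.angle, InnerProductGeometry.angle]
  simp only [vsub_eq_sub]
  have hip : (inner ℝ (pt a (h/a) - pt h 1) (pt (-h) (-1) - pt h 1) : ℝ)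
      = (a-h)*(-2*h) + (h/a-1)*(-2) := by
    simp [PiLp.inner_apply, Fin.sum_univ_two, PiLp.sub_apply, RCLike.inner_apply, pt]
    ring
  rw [hip, normP h a hh ha, normPQ h hh]
  have harg : ((a-h)*(-2*h) + (h/a-1)*(-2)) / ((a-h) * Real.sqrt (a^2+1) / a * (2 * Real.sqrt (h^2+1)))
      = (1 - a*h)/(Real.sqrt (a^2+1) * Real.sqrt (h^2+1)) := by
    have h1 : Real.sqrt (h^2+1) > 0 := by positivity
    have h2 : Real.sqrt (a^2+1) > 0 := by positivity
    have h3 : a - h > 0 := by linarith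
    field_simp
    ring
  rw [harg, ← cosA h a hh ha0, Real.arccos_cos]
  · have := Real.arctan_lt_pi_div_two (1/h)
    have := Real.arctan_lt_pi_div_two (1/a)
    linarith
  · have h1 : 0 < Real.arctan (1/h) := by
      rw [← Real.arctan_zero]; exact Real.arctan_strictMono (by positivity)
    have h2 : 0 < Real.arctan (1/a) := by
      rw [← Real.arctan_zero]; exact Real.arctan_strictMono (by positivity)
    have := Real.pi_pos
    linarith

lemma angleQ (h a : ℝ) (hh : 0 < h) (ha : h < a) :
    ∠ (pt a (h/a)) (pt (-h) (-1)) (pt h 1)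
      = Real.arctan (1/h) - Real.arctan (1/a) := by
  have ha0 : 0 < a := hh.trans ha
  rw [EuclideanGeometry.angle, InnerProductGeometry.angle]
  simp only [vsub_eq_sub]
  have hip : (inner ℝ (pt a (h/a) - pt (-h) (-1)) (pt h 1 - pt (-h) (-1)) : ℝ)
      = (a+h)*(2*h) + (h/a+1)*2 := by
    simp [PiLp.inner_apply, Fin.sum_univ_two, PiLp.sub_apply, RCLike.inner_apply, pt]
    ring
  rw [hip, normQ h a hh ha, normQP h hh]
  have harg : ((a+h)*(2*h) + (h/a+1)*2) / ((a+h) * Real.sqrt (a^2+1) / a * (2 * Real.sqrt (h^2+1)))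
      = (a*h + 1)/(Real.sqrt (a^2+1) * Real.sqrt (h^2+1)) := by
    have h1 : Real.sqrt (h^2+1) > 0 := by positivity
    have h2 : Real.sqrt (a^2+1) > 0 := by positivity
    have h3 : a + h > 0 := by linarith
    field_simp
    ring
  rw [harg, ← cosB h a hh ha0, Real.arccos_cos]
  · have : Real.arctan (1/a) < Real.arctan (1/h) := by
      apply Real.arctan_strictMono
      exact one_div_lt_one_div_of_lt hh ha
    linarith
  · have h1 := Real.arctan_lt_pi_div_two (1/h)
    have h2 : 0 < Real.arctan (1/a) := by
      rw [← Real.arctan_zero]; exact Real.arctan_strictMono (by positivity)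
    have := Real.pi_pos
    linarith

lemma normE : ‖pt 1 0‖ = 1 := by
  rw [EuclideanSpace.norm_eq]
  simp [Fin.sum_univ_two, pt, PiLp.toLp_apply]


/-- If `C` (to the right of `P = (h,1)` and `Q = (-h,-1)`) is such that `PC` and `QC` have
slopes `-m` and `m`, then any point `H = (x, h/x)` with `x > h` on the hyperbola `x*y = h`
satisfies: the unsigned angle of `PH` with the positive `X`-direction equals that of `QH`,
and the angle difference `∠HPQ - ∠HQP` equals `∠CPQ - ∠CQP`. -/
theorem stmt_1 (h m : ℝ) (hh : 0 < h) (hm : 0 < m)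
    (C : EuclideanSpace ℝ (Fin 2)) (hC : C 0 > h)
    (hPC : (C 1 - 1) / (C 0 - h) = -m) (hQC : (C 1 + 1) / (C 0 + h) = m)
    (x : ℝ) (hx : x > h) :
    let P : EuclideanSpace ℝ (Fin 2) := !₂[h, 1]
    let Q : EuclideanSpace ℝ (Fin 2) := !₂[-h, -1]
    let H : EuclideanSpace ℝ (Fin 2) := !₂[x, h / x]
    InnerProductGeometry.angle (H - P) (!₂[1, 0] : EuclideanSpace ℝ (Fin 2)) =
      InnerProductGeometry.angle (H - Q) (!₂[1, 0] : EuclideanSpace ℝ (Fin 2)) ∧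
    ∠ H P Q - ∠ H Q P = ∠ C P Q - ∠ C Q P := by
  intro P Q H
  have hx0 : 0 < x := hh.trans hx
  have hm0 : m ≠ 0 := hm.ne'
  constructor
  · show InnerProductGeometry.angle (pt x (h/x) - pt h 1) (pt 1 0)
      = InnerProductGeometry.angle (pt x (h/x) - pt (-h) (-1)) (pt 1 0)
    rw [InnerProductGeometry.angle, InnerProductGeometry.angle]
    congr 1
    have hip1 : (inner ℝ (pt x (h/x) - pt h 1) (pt 1 0) : ℝ) = x - h := by
      simp [PiLp.inner_apply, Fin.sum_univ_two, PiLp.sub_apply, RCLike.inner_apply, pt]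
    have hip2 : (inner ℝ (pt x (h/x) - pt (-h) (-1)) (pt 1 0) : ℝ) = x + h := by
      simp [PiLp.inner_apply, Fin.sum_univ_two, PiLp.sub_apply, RCLike.inner_apply, pt]
    rw [hip1, hip2, normP h x hh hx, normQ h x hh hx, normE]
    have h1 : Real.sqrt (x^2+1) > 0 := by positivity
    have h2 : x - h > 0 := by linarith
    have h3 : x + h > 0 := by linarith
    field_simp
  · have d1 : C 0 - h ≠ 0 := ne_of_gt (by linarith)
    have d2 : C 0 + h ≠ 0 := ne_of_gt (by linarith)
    rw [div_eq_iff d1] at hPC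
    rw [div_eq_iff d2] at hQC
    have hC1 : C 1 = m * h := by linear_combination hPC / 2 + hQC / 2
    have hC0m : C 0 * m = 1 := by linear_combination hPC / 2 - hQC / 2
    have hC0 : C 0 = 1 / m := by rw [eq_div_iff hm0]; linarith
    have hm' : h < 1 / m := by rw [← hC0]; exact hC
    have hCeq : C = pt (1/m) (h / (1/m)) := by
      have hval : h / (1/m) = m * h := by
        field_simp
      ext i
      fin_cases i <;> simp [pt, hC0, hC1, hval, mul_comm]
    show ∠ (pt x (h/x)) (pt h 1) (pt (-h) (-1)) - ∠ (pt x (h/x)) (pt (-h) (-1)) (pt h 1)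
      = ∠ C (pt h 1) (pt (-h) (-1)) - ∠ C (pt (-h) (-1)) (pt h 1)
    rw [hCeq, angleP h x hh hx, angleQ h x hh hx, angleP h (1/m) hh hm',
      angleQ h (1/m) hh hm']
    ring
end

section
/- Let P and Q be distinct points in ℝ² and fix a real number d with |d| < π. Consider the set L of points H not on line PQ, on a fixed side of line PQ, such that ∠HPQ − ∠HQP = d, where ∠HPQ and ∠HQP are the angles at P and Q in triangle P, Q, H. Then there is an affine isometry of the plane followed by a uniform scaling taking L into the curve {(x, y) : xy = c} for some constant c (a rectangular-hyperbola branch), or into a straight ray when d = 0. -/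
open EuclideanGeometry RealInnerProductSpace

noncomputable abbrev E2 := EuclideanSpace ℝ (Fin 2)

lemma aux_basis (e1 e2 : E2) (h11 : ⟪e1, e1⟫ = (1:ℝ)) (h22 : ⟪e2, e2⟫ = (1:ℝ))
    (h12 : ⟪e1, e2⟫ = (0:ℝ)) :
    ∃ b : OrthonormalBasis (Fin 2) ℝ E2, b 0 = e1 ∧ b 1 = e2 := by
  have h21 : ⟪e2, e1⟫ = (0:ℝ) := by rw [real_inner_comm]; exact h12
  have hon : Orthonormal ℝ ![e1, e2] := by
    rw [orthonormal_iff_ite]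
    intro i j
    have n1 : ‖e1‖ = 1 := by rw [norm_eq_sqrt_real_inner, h11, Real.sqrt_one]
    have n2 : ‖e2‖ = 1 := by rw [norm_eq_sqrt_real_inner, h22, Real.sqrt_one]
    fin_cases i <;> fin_cases j <;> simp [h11, h22, h12, h21, n1, n2]
  have hcard : Fintype.card (Fin 2) = Module.finrank ℝ E2 := by
    simp [finrank_euclideanSpace_fin]
  have hsp : Submodule.span ℝ (Set.range ![e1, e2]) = ⊤ :=
    hon.linearIndependent.span_eq_top_of_card_eq_finrank hcard
  refine ⟨OrthonormalBasis.mk hon hsp.ge, ?_, ?_⟩ <;> simp [OrthonormalBasis.coe_mk]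

lemma aux_ip (e1 e2 : E2) (h11 : ⟪e1, e1⟫ = (1:ℝ)) (h22 : ⟪e2, e2⟫ = (1:ℝ))
    (h12 : ⟪e1, e2⟫ = (0:ℝ)) (a b c e : ℝ) :
    ⟪a • e1 + b • e2, c • e1 + e • e2⟫ = a*c + b*e := by
  have h21 : ⟪e2, e1⟫ = (0:ℝ) := by rw [real_inner_comm]; exact h12
  simp only [inner_add_left, inner_add_right, real_inner_smul_left, real_inner_smul_right,
    h11, h12, h21, h22]
  ring

lemma aux_expand (b : OrthonormalBasis (Fin 2) ℝ E2) (v : E2) :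
    ⟪b 0, v⟫ • b 0 + ⟪b 1, v⟫ • b 1 = v := by
  have h := b.sum_repr v
  rw [Fin.sum_univ_two] at h
  simpa [b.repr_apply_apply] using h

set_option maxHeartbeats 2000000 in
/-- Coordinate-free version: for distinct `P, Q` and `|d| < π`, the locus `L` of points
`H` on a fixed side of line `PQ` with `∠HPQ - ∠HQP = d` is mapped, by an affine isometry
followed by a positive uniform scaling, into a rectangular hyperbola `{x*y = c}`, or
into a straight ray when `d = 0`. -/
theorem stmt_6 (P Q R : EuclideanSpace ℝ (Fin 2)) (hPQ : P ≠ Q)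
    (d : ℝ) (hd : |d| < Real.pi)
    (hR : R ∉ affineSpan ℝ ({P, Q} : Set (EuclideanSpace ℝ (Fin 2))))
    (L : Set (EuclideanSpace ℝ (Fin 2)))
    (hL : L = {H : EuclideanSpace ℝ (Fin 2) |
      (affineSpan ℝ ({P, Q} : Set (EuclideanSpace ℝ (Fin 2)))).SSameSide H R ∧
        ∠ H P Q - ∠ H Q P = d}) :
    ∃ (f : EuclideanSpace ℝ (Fin 2) ≃ᵃⁱ[ℝ] EuclideanSpace ℝ (Fin 2)) (r : ℝ), 0 < r ∧
      ((d = 0 ∧ ∃ a v : EuclideanSpace ℝ (Fin 2), v ≠ 0 ∧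
          ∀ H ∈ L, ∃ t : ℝ, 0 ≤ t ∧ f H = a + t • v) ∨
        ∃ c : ℝ, ∀ H ∈ L, (r • f H) 0 * (r • f H) 1 = c) := by
  set w : E2 := Q - P with hwdef
  have hw0 : w ≠ 0 := sub_ne_zero.2 hPQ.symm
  set W : ℝ := ‖w‖ with hWdef
  have hW : 0 < W := norm_pos_iff.mpr hw0
  set M : E2 := midpoint ℝ P Q with hMdef
  set e1 : E2 := W⁻¹ • w with he1def
  have hwe1 : w = W • e1 := by
    rw [he1def, smul_smul, mul_inv_cancel₀ hW.ne', one_smul]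
  have h11 : ⟪e1, e1⟫ = (1:ℝ) := by
    rw [he1def, real_inner_smul_left, real_inner_smul_right, real_inner_self_eq_norm_sq,
      ← hWdef]
    field_simp
  set e20 : E2 := !₂[-(e1 1), e1 0] with he20def
  have h2020 : ⟪e20, e20⟫ = (1:ℝ) := by
    have : ⟪e20, e20⟫ = ⟪e1, e1⟫ := by
      rw [he20def, PiLp.inner_apply, PiLp.inner_apply]
      simp [Fin.sum_univ_two, RCLike.inner_apply]
      ring
    rw [this, h11]
  have h120 : ⟪e1, e20⟫ = (0:ℝ) := by
    simp [PiLp.inner_apply, Fin.sum_univ_two, he20def, RCLike.inner_apply]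
    ring
  have hMP : M - P = (W/2) • e1 := by
    rw [hMdef, midpoint_sub_left, ← hwdef, hwe1, smul_smul, invOf_eq_inv]
    congr 1
    ring
  have hMQ : M - Q = -((W/2) • e1) := by
    rw [hMdef, midpoint_sub_right, ← neg_sub Q P, ← hwdef, hwe1, smul_neg, smul_smul,
      invOf_eq_inv]
    congr 2
    ring
  set σ : ℝ := if 0 < ⟪e20, R - M⟫ then 1 else -1 with hσdef
  have hσsq : σ * σ = 1 := by
    rw [hσdef]; split <;> norm_num
  set e2 : E2 := σ • e20 with he2def
  have h22 : ⟪e2, e2⟫ = (1:ℝ) := by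
    rw [he2def, real_inner_smul_left, real_inner_smul_right, h2020]
    rw [mul_one]; exact hσsq
  have h12 : ⟪e1, e2⟫ = (0:ℝ) := by
    rw [he2def, real_inner_smul_right, h120, mul_zero]
  have h21 : ⟪e2, e1⟫ = (0:ℝ) := by rw [real_inner_comm]; exact h12
  have hwE2 : ⟪e2, w⟫ = (0:ℝ) := by
    rw [hwe1, real_inner_smul_right, h21, mul_zero]
  obtain ⟨b, hb0, hb1⟩ := aux_basis e1 e2 h11 h22 h12
  have hexp : ∀ v : E2, ⟪e1, v⟫ • e1 + ⟪e2, v⟫ • e2 = v := by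
    intro v
    have := aux_expand b v
    rwa [hb0, hb1] at this
  -- membership in the line
  have hmem : ∀ z : E2, z ∈ affineSpan ℝ ({P, Q} : Set E2) ↔ ⟪e2, z - M⟫ = 0 := by
    intro z
    constructor
    · intro hz
      have h1 : (z - P) +ᵥ P ∈ affineSpan ℝ ({P, Q} : Set E2) := by
        simpa [vadd_eq_add, sub_add_cancel] using hz
      rw [vadd_left_mem_affineSpan_pair] at h1
      obtain ⟨r, hr⟩ := h1
      have hzM : z - M = (z - P) - (M - P) := by abel
      rw [vsub_eq_sub, ← hwdef] at hr
      rw [hzM, ← hr, hMP, inner_sub_right, real_inner_smul_right, hwE2,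
        real_inner_smul_right, h21]
      ring
    · intro hz
      have hz2 : z = ((⟪e1, z - M⟫ + W/2) / W) • (Q -ᵥ P) +ᵥ P := by
        have hthis := hexp (z - M)
        rw [hz, zero_smul, add_zero] at hthis
        have hzz : z = (z - M) + (M - P) + P := by abel
        have h3 : z = ⟪e1, z - M⟫ • e1 + (M - P) + P := by
          conv_lhs => rw [hzz, ← hthis]
        rw [vsub_eq_sub, ← hwdef, vadd_eq_add, hwe1, smul_smul, div_mul_cancel₀ _ hW.ne',
          add_smul, ← hMP]
        conv_lhs => rw [h3]
      rw [hz2]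
      exact smul_vsub_vadd_mem_affineSpan_pair _ _ _
  have hRn : ⟪e2, R - M⟫ ≠ 0 := fun h => hR ((hmem R).mpr h)
  have hYR : 0 < ⟪e2, R - M⟫ := by
    rcases lt_trichotomy (⟪e20, R - M⟫ : ℝ) 0 with h | h | h
    · have hσ1 : σ = -1 := by rw [hσdef, if_neg (by linarith)]
      rw [he2def, real_inner_smul_left, hσ1]
      nlinarith
    · exfalso
      apply hRn
      rw [he2def, real_inner_smul_left, h, mul_zero]
    · have hσ1 : σ = 1 := by rw [hσdef, if_pos h]
      rw [he2def, real_inner_smul_left, hσ1, one_mul]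
      exact h
  -- rotated basis
  set si : ℝ := Real.sin (d/2) with hsidef
  set co : ℝ := Real.cos (d/2) with hcodef
  have hsico : si^2 + co^2 = 1 := Real.sin_sq_add_cos_sq _
  set e1' : E2 := co • e1 + si • e2 with he1'def
  set e2' : E2 := (-si) • e1 + co • e2 with he2'def
  have hip : ∀ a b c e : ℝ, ⟪a • e1 + b • e2, c • e1 + e • e2⟫ = a*c + b*e :=
    aux_ip e1 e2 h11 h22 h12
  obtain ⟨b', hb'0, hb'1⟩ := aux_basis e1' e2'
    (by rw [he1'def, hip]; linear_combination hsico)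
    (by rw [he2'def, hip]; linear_combination hsico)
    (by rw [he1'def, he2'def, hip]; ring)
  refine ⟨(AffineIsometryEquiv.constVAdd ℝ E2 (-M)).trans
      b'.repr.toAffineIsometryEquiv, 1, one_pos,
    Or.inr ⟨-(W/2)^2 * Real.sin d / 2, ?_⟩⟩
  intro H hH
  rw [hL] at hH
  obtain ⟨hside, hang⟩ := hH
  set X : ℝ := ⟪e1, H - M⟫ with hXdef
  set Y : ℝ := ⟪e2, H - M⟫ with hYdef
  have hHM : H - M = X • e1 + Y • e2 := (hexp (H - M)).symm
  -- Y > 0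
  have hY : 0 < Y := by
    obtain ⟨p₁, hp₁, p₂, hp₂, hray⟩ := hside.1
    have h1 : ((innerSL ℝ e2).toLinearMap) (H -ᵥ p₁) = Y := by
      simp only [ContinuousLinearMap.coe_coe, innerSL_apply_apply, vsub_eq_sub]
      rw [show H - p₁ = (H - M) - (p₁ - M) by abel, inner_sub_right,
        (hmem p₁).mp hp₁, sub_zero, hYdef]
    have h2 : ((innerSL ℝ e2).toLinearMap) (R -ᵥ p₂) = ⟪e2, R - M⟫ := by
      simp only [ContinuousLinearMap.coe_coe, innerSL_apply_apply, vsub_eq_sub]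
      rw [show R - p₂ = (R - M) - (p₂ - M) by abel, inner_sub_right,
        (hmem p₂).mp hp₂, sub_zero]
    have hray2 : SameRay ℝ Y (⟪e2, R - M⟫ : ℝ) := by
      have := hray.map ((innerSL ℝ e2).toLinearMap)
      rwa [h1, h2] at this
    rcases hray2 with h | h | ⟨r₁, r₂, hr₁, hr₂, hr⟩
    · exact absurd ((hmem H).mpr h) hside.2.1
    · exact absurd h hYR.ne'
    · rw [smul_eq_mul, smul_eq_mul] at hr
      have h' : 0 < r₁ * Y := by rw [hr]; exact mul_pos hr₂ hYR
      by_contra h0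
      push_neg at h0
      have h'' : r₁ * Y ≤ 0 := mul_nonpos_iff.mpr (Or.inl ⟨hr₁.le, h0⟩)
      linarith only [h', h'']
  -- H off the line, nonzero side vectors
  have hHP : H - P ≠ 0 := by
    intro h
    exact hside.2.1 (by rw [sub_eq_zero] at h; rw [h]; exact left_mem_affineSpan_pair ℝ P Q)
  have hHQ : H - Q ≠ 0 := by
    intro h
    exact hside.2.1 (by rw [sub_eq_zero] at h; rw [h]; exact right_mem_affineSpan_pair ℝ P Q)
  -- coordinates of the side vectors
  have hu : H - P = (X + W/2) • e1 + Y • e2 := by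
    rw [show H - P = (H - M) + (M - P) by abel, hHM, hMP, add_smul]
    abel
  have hu' : H - Q = (X - W/2) • e1 + Y • e2 := by
    rw [show H - Q = (H - M) + (M - Q) by abel, hHM, hMQ, sub_smul]
    abel
  have hwc : w = W • e1 + (0:ℝ) • e2 := by rw [zero_smul, add_zero]; exact hwe1
  have hnwc : -w = (-W) • e1 + (0:ℝ) • e2 := by
    rw [zero_smul, add_zero, neg_smul]; exact congrArg Neg.neg hwe1
  -- inner products
  have hiuu : ⟪H - P, H - P⟫ = (X + W/2)^2 + Y^2 := by rw [hu, hip]; ring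
  have hiuw : ⟪H - P, w⟫ = (X + W/2) * W := by rw [hu, hwc, hip]; ring
  have hivv : ⟪H - Q, H - Q⟫ = (X - W/2)^2 + Y^2 := by rw [hu', hip]; ring
  have hivw : ⟪H - Q, -w⟫ = -((X - W/2) * W) := by rw [hu', hnwc, hip]; ring
  have hiww : ⟪w, w⟫ = W^2 := by rw [hwc, hip]; ring
  have hinn : ⟪-w, -w⟫ = W^2 := by rw [inner_neg_neg]; exact hiww
  -- angle quantities
  set α : ℝ := InnerProductGeometry.angle (H - P) w with hαdef
  set β : ℝ := InnerProductGeometry.angle (H - Q) (-w) with hβdef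
  have hαeq : ∠ H P Q = α := by
    rw [EuclideanGeometry.angle, hαdef, vsub_eq_sub, vsub_eq_sub, ← hwdef]
  have hβeq : ∠ H Q P = β := by
    rw [EuclideanGeometry.angle, hβdef, vsub_eq_sub, vsub_eq_sub,
      show P - Q = -w by rw [hwdef]; abel]
  have hSA : Real.sin α * (‖H - P‖ * ‖w‖) = W * Y := by
    rw [hαdef, InnerProductGeometry.sin_angle_mul_norm_mul_norm,
      show ⟪H - P, H - P⟫ * ⟪w, w⟫ - ⟪H - P, w⟫ * ⟪H - P, w⟫ = (W*Y)^2 by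
        rw [hiuu, hiuw, hiww]; ring]
    exact Real.sqrt_sq (by positivity)
  have hCA : Real.cos α * (‖H - P‖ * ‖w‖) = (X + W/2) * W := by
    rw [hαdef, InnerProductGeometry.cos_angle_mul_norm_mul_norm, hiuw]
  have hSB : Real.sin β * (‖H - Q‖ * ‖w‖) = W * Y := by
    rw [show ‖w‖ = ‖-w‖ by rw [norm_neg], hβdef,
      InnerProductGeometry.sin_angle_mul_norm_mul_norm,
      show ⟪H - Q, H - Q⟫ * ⟪-w, -w⟫ - ⟪H - Q, -w⟫ * ⟪H - Q, -w⟫ = (W*Y)^2 by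
        rw [hivv, hivw, hinn]; ring]
    exact Real.sqrt_sq (by positivity)
  have hCB : Real.cos β * (‖H - Q‖ * ‖w‖) = -((X - W/2) * W) := by
    rw [show ‖w‖ = ‖-w‖ by rw [norm_neg], hβdef,
      InnerProductGeometry.cos_angle_mul_norm_mul_norm, hivw]
  set N : ℝ := (‖H - P‖ * ‖w‖) * (‖H - Q‖ * ‖w‖) with hNdef
  have hN : 0 < N := by
    have h1 : 0 < ‖H - P‖ := norm_pos_iff.mpr hHP
    have h2 : 0 < ‖H - Q‖ := norm_pos_iff.mpr hHQ
    positivity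
  have hdab : d = α - β := by rw [← hang, hαeq, hβeq]
  have hsd : Real.sin d * N = -(2 * W^2 * (X * Y)) := by
    rw [hdab, Real.sin_sub, hNdef]
    calc (Real.sin α * Real.cos β - Real.cos α * Real.sin β) *
          ((‖H - P‖ * ‖w‖) * (‖H - Q‖ * ‖w‖))
        = (Real.sin α * (‖H - P‖ * ‖w‖)) * (Real.cos β * (‖H - Q‖ * ‖w‖)) -
          (Real.cos α * (‖H - P‖ * ‖w‖)) * (Real.sin β * (‖H - Q‖ * ‖w‖)) := by ring
      _ = -(2 * W^2 * (X * Y)) := by rw [hSA, hCA, hSB, hCB]; ring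
  have hcd : Real.cos d * N = W^2 * ((W/2)^2 - X^2 + Y^2) := by
    rw [hdab, Real.cos_sub, hNdef]
    calc (Real.cos α * Real.cos β + Real.sin α * Real.sin β) *
          ((‖H - P‖ * ‖w‖) * (‖H - Q‖ * ‖w‖))
        = (Real.cos α * (‖H - P‖ * ‖w‖)) * (Real.cos β * (‖H - Q‖ * ‖w‖)) +
          (Real.sin α * (‖H - P‖ * ‖w‖)) * (Real.sin β * (‖H - Q‖ * ‖w‖)) := by ring
      _ = W^2 * ((W/2)^2 - X^2 + Y^2) := by rw [hSA, hCA, hSB, hCB]; ring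
  -- double angle
  have hsin2 : Real.sin d = 2 * si * co := by
    rw [show d = 2 * (d/2) by ring, Real.sin_two_mul, hsidef, hcodef]
  have hcos2 : Real.cos d = co^2 - si^2 := by
    rw [show d = 2 * (d/2) by ring, Real.cos_two_mul]
    have h2 : Real.cos (d / 2) = co := hcodef.symm
    rw [h2]
    linear_combination hsico
  have hA : si * co * N = -(W^2 * (X * Y)) := by
    have h := hsd
    rw [hsin2] at h
    linarith only [h]
  have hB : (co^2 - si^2) * N = W^2 * ((W/2)^2 - X^2 + Y^2) := by rw [← hcos2]; exact hcd
  -- evaluate the map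
  have hf0 : (b'.repr (-M +ᵥ H)) 0 = co * X + si * Y := by
    rw [b'.repr_apply_apply, hb'0, vadd_eq_add, neg_add_eq_sub, hHM, he1'def, hip]
  have hf1 : (b'.repr (-M +ᵥ H)) 1 = -si * X + co * Y := by
    rw [b'.repr_apply_apply, hb'1, vadd_eq_add, neg_add_eq_sub, hHM, he2'def, hip]
  have hfin : (co * X + si * Y) * (-si * X + co * Y) = -(W/2)^2 * Real.sin d / 2 := by
    have hkey : ((co * X + si * Y) * (-si * X + co * Y)) * N =
        (-(W/2)^2 * Real.sin d / 2) * N := by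
      have hexpand : ((co * X + si * Y) * (-si * X + co * Y)) * N =
          (Y^2 - X^2) * (si * co * N) + (X * Y) * ((co^2 - si^2) * N) := by ring
      have hrhs : (-(W/2)^2 * Real.sin d / 2) * N = -(W/2)^2 / 2 * (Real.sin d * N) := by
        ring
      rw [hexpand, hA, hB, hrhs, hsd]
      ring
    exact mul_right_cancel₀ hN.ne' hkey
  simp only [one_smul, AffineIsometryEquiv.coe_trans, Function.comp_apply,
    LinearIsometryEquiv.coe_toAffineIsometryEquiv, AffineIsometryEquiv.coe_constVAdd]
  rw [hf0, hf1]
  exact hfin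
end

section
/- With P = (h, 1) and Q = (−h, −1), h > 0: for any two points H₁ = (x₁, h/x₁) and H₂ = (x₂, h/x₂) with x₁, x₂ > h on the hyperbola xy = h, the signed angle differences agree: (angle of ray PH₁ below the X-axis) equals (angle of ray QH₁ above the X-axis), and consequently ∠H₁PQ − ∠H₁QP = ∠H₂PQ − ∠H₂QP, i.e., the angle difference at P and Q is the same for all points on this hyperbola branch. -/
open EuclideanGeometry

private lemma norm_pair' (v : EuclideanSpace ℝ (Fin 2)) :
    ‖v‖ = ‖(⟨v 0, v 1⟩ : ℂ)‖ := by
  rw [EuclideanSpace.norm_eq, Complex.norm_def, Complex.normSq_apply]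
  simp [Fin.sum_univ_two]
  ring_nf

private lemma angle_transfer' (u v : EuclideanSpace ℝ (Fin 2)) :
    InnerProductGeometry.angle u v
      = InnerProductGeometry.angle (⟨u 0, u 1⟩ : ℂ) (⟨v 0, v 1⟩ : ℂ) := by
  unfold InnerProductGeometry.angle
  rw [norm_pair' u, norm_pair' v, Complex.inner]
  congr 2
  simp [PiLp.inner_apply, Fin.sum_univ_two, Complex.mul_re]

private lemma arg_mk_pos_re (a b : ℝ) (ha : 0 < a) :
    Complex.arg (⟨a, b⟩ : ℂ) = Real.arctan (b / a) := by
  have h := Complex.tan_arg (⟨a, b⟩ : ℂ)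
  have hr : |Complex.arg (⟨a, b⟩ : ℂ)| < Real.pi / 2 :=
    Complex.abs_arg_lt_pi_div_two_iff.2 (Or.inl ha)
  rw [← h, Real.arctan_tan (abs_lt.1 hr).1 (abs_lt.1 hr).2]

private lemma angle_eq_abs_arg_sub (z w : ℂ) (hz : z ≠ 0) (hw : w ≠ 0)
    (hmem : z.arg - w.arg ∈ Set.Ioc (-Real.pi) Real.pi) :
    InnerProductGeometry.angle z w = |z.arg - w.arg| := by
  rw [Complex.angle_eq_abs_arg hz hw]
  congr 1
  have h1 : ((z / w).arg : Real.Angle) = ((z.arg - w.arg : ℝ) : Real.Angle) := by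
    rw [Complex.arg_div_coe_angle hz hw, Real.Angle.coe_sub]
  have h2 := congrArg Real.Angle.toReal h1
  rwa [Complex.arg_coe_angle_toReal_eq_arg,
    Real.Angle.toReal_coe_eq_self_iff.2 ⟨hmem.1, hmem.2⟩] at h2

private lemma key (h x : ℝ) (hh : 0 < h) (hx : x > h)
    (H P Q : EuclideanSpace ℝ (Fin 2))
    (hH : H = !₂[x, h / x]) (hP : P = !₂[h, 1]) (hQ : Q = !₂[-h, -1]) :
    ∠ H P Q - ∠ H Q P = Real.pi - 2 * Real.arctan (1 / h) := by
  have hx0 : 0 < x := hh.trans hx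
  have hxh : x - h ≠ 0 := sub_ne_zero.2 hx.ne'
  set s := Real.arctan (1 / h) with hs
  set t := Real.arctan (1 / x) with ht
  have hs_pos : 0 < s := by
    rw [hs, ← Real.arctan_zero]
    exact Real.arctan_strictMono (by positivity)
  have ht_pos : 0 < t := by
    rw [ht, ← Real.arctan_zero]
    exact Real.arctan_strictMono (by positivity)
  have hs_lt : s < Real.pi / 2 := Real.arctan_lt_pi_div_two _
  have ht_lt : t < Real.pi / 2 := Real.arctan_lt_pi_div_two _
  have hts : t < s := Real.arctan_strictMono (one_div_lt_one_div_of_lt hh hx)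
  have pi_pos := Real.pi_pos
  -- coordinates
  have hH0 : H 0 = x := by rw [hH]; rfl
  have hH1 : H 1 = h / x := by rw [hH]; rfl
  have hP0 : P 0 = h := by rw [hP]; rfl
  have hP1 : P 1 = 1 := by rw [hP]; rfl
  have hQ0 : Q 0 = -h := by rw [hQ]; rfl
  have hQ1 : Q 1 = -1 := by rw [hQ]; rfl
  -- arguments of the four complex vectors
  have hHP : Complex.arg (⟨x - h, h / x - 1⟩ : ℂ) = -t := by
    rw [arg_mk_pos_re _ _ (by linarith)]
    rw [show (h / x - 1) / (x - h) = -(1 / x) by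
      field_simp
      ring]
    rw [Real.arctan_neg, ht]
  have hQP : Complex.arg (⟨-h - h, -1 - 1⟩ : ℂ) = s - Real.pi := by
    have hneg : (⟨-h - h, -1 - 1⟩ : ℂ) = -(⟨2 * h, 2⟩ : ℂ) := by
      apply Complex.ext <;> simp <;> ring
    rw [hneg, Complex.arg_neg_eq_arg_sub_pi_of_im_pos (by norm_num),
      arg_mk_pos_re _ _ (by linarith)]
    rw [hs]
    congr 2
    field_simp
  have hHQ : Complex.arg (⟨x - -h, h / x - -1⟩ : ℂ) = t := by
    rw [arg_mk_pos_re _ _ (by linarith)]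
    rw [ht]
    congr 1
    rw [div_eq_div_iff (by linarith) hx0.ne']
    field_simp
    ring
  have hPQ : Complex.arg (⟨h - -h, 1 - -1⟩ : ℂ) = s := by
    rw [arg_mk_pos_re _ _ (by linarith), hs]
    congr 1
    rw [div_eq_div_iff (by linarith) hh.ne']
    ring
  -- angle at P
  have a1 : ∠ H P Q = Real.pi - s - t := by
    unfold EuclideanGeometry.angle
    rw [angle_transfer']
    have e0 : (H -ᵥ P) 0 = x - h := by simp [vsub_eq_sub, hH0, hP0]
    have e1 : (H -ᵥ P) 1 = h / x - 1 := by simp [vsub_eq_sub, hH1, hP1]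
    have e2 : (Q -ᵥ P) 0 = -h - h := by simp [vsub_eq_sub, hQ0, hP0]
    have e3 : (Q -ᵥ P) 1 = -1 - 1 := by simp [vsub_eq_sub, hQ1, hP1]
    rw [e0, e1, e2, e3]
    have hz : (⟨x - h, h / x - 1⟩ : ℂ) ≠ 0 := by
      intro hc
      have := congrArg Complex.re hc
      simp at this
      linarith
    have hw : (⟨-h - h, -1 - 1⟩ : ℂ) ≠ 0 := by
      intro hc
      have := congrArg Complex.im hc
      simp at this
      linarith
    rw [angle_eq_abs_arg_sub _ _ hz hw]
    · rw [hHP, hQP, abs_of_pos (by linarith)]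
      ring
    · rw [hHP, hQP]
      exact ⟨by linarith, by linarith⟩
  -- angle at Q
  have a2 : ∠ H Q P = s - t := by
    unfold EuclideanGeometry.angle
    rw [angle_transfer']
    have e0 : (H -ᵥ Q) 0 = x - -h := by simp [vsub_eq_sub, hH0, hQ0]
    have e1 : (H -ᵥ Q) 1 = h / x - -1 := by simp [vsub_eq_sub, hH1, hQ1]
    have e2 : (P -ᵥ Q) 0 = h - -h := by simp [vsub_eq_sub, hP0, hQ0]
    have e3 : (P -ᵥ Q) 1 = 1 - -1 := by simp [vsub_eq_sub, hP1, hQ1]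
    rw [e0, e1, e2, e3]
    have hz : (⟨x - -h, h / x - -1⟩ : ℂ) ≠ 0 := by
      intro hc
      have := congrArg Complex.re hc
      simp at this
      linarith
    have hw : (⟨h - -h, 1 - -1⟩ : ℂ) ≠ 0 := by
      intro hc
      have := congrArg Complex.re hc
      simp at this
      linarith
    rw [angle_eq_abs_arg_sub _ _ hz hw]
    · rw [hHQ, hPQ, abs_of_neg (by linarith)]
      ring
    · rw [hHQ, hPQ]
      exact ⟨by linarith, by linarith⟩
  rw [a1, a2]
  ring

/-- With `P = (h, 1)`, `Q = (-h, -1)`, `h > 0`: for points `H₁, H₂` on the hyperbola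
branch `{(x, h/x) : x > h}`, the angle of the ray `PH₁` below the `X`-axis equals the
angle of the ray `QH₁` above the `X`-axis, and consequently the angle difference
`∠HPQ - ∠HQP` is the same for all points of the branch. -/
theorem stmt_7 (h x₁ x₂ : ℝ) (hh : 0 < h) (hx₁ : x₁ > h) (hx₂ : x₂ > h) :
    let P : EuclideanSpace ℝ (Fin 2) := !₂[h, 1]
    let Q : EuclideanSpace ℝ (Fin 2) := !₂[-h, -1]
    let H₁ : EuclideanSpace ℝ (Fin 2) := !₂[x₁, h / x₁]
    let H₂ : EuclideanSpace ℝ (Fin 2) := !₂[x₂, h / x₂]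
    Real.arctan ((1 - h / x₁) / (x₁ - h)) = Real.arctan ((h / x₁ + 1) / (x₁ + h)) ∧
    ∠ H₁ P Q - ∠ H₁ Q P = ∠ H₂ P Q - ∠ H₂ Q P := by
  intro P Q H₁ H₂
  have hx₁0 : 0 < x₁ := hh.trans hx₁
  constructor
  · congr 1
    rw [div_eq_div_iff (by linarith) (by linarith)]
    field_simp
    ring
  · rw [key h x₁ hh hx₁ H₁ P Q rfl rfl rfl, key h x₂ hh hx₂ H₂ P Q rfl rfl rfl]
end
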